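/- If W ~ Binomial(m, R) and for δ ∈ (0,1) the one-sided Clopper–Pearson upper bound after observing w failures is defined as R_upper(w) = BetaInv(1 − δ; w + 1, m − w) (the (1−δ)-quantile of the Beta(w+1, m−w) distribution, with R_upper(m) = 1), then Pr(R ≤ R_upper(W)) ≥ 1 − δ. -/

import Mathlib

open MeasureTheory

/-- The regularized incomplete beta function `I_x(a, b)`. -/
noncomputable def regIncBeta (a b x : ℝ) : ℝ :=
  (∫ u in (0 : ℝ)..x, u ^ (a - 1) * (1 - u) ^ (b - 1)) /
    (Real.Gamma a * Real.Gamma b / Real.Gamma (a + b))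

/-- `BetaInv(p; a, b)`: the `p`-th quantile of the `Beta(a, b)` distribution. -/
noncomputable def betaInv (p a b : ℝ) : ℝ :=
  sInf {x : ℝ | x ∈ Set.Icc (0 : ℝ) 1 ∧ p ≤ regIncBeta a b x}

/-! The binomial probabilities are the Bernstein polynomials `b_{m,k}(R)`. For `w < m`, the
derivative of the upper tail `x ↦ ∑_{w < k ≤ m} b_{m,k}(x)` telescopes to `m · b_{m-1,w}(x)`, so
`I_x(w + 1, m - w)` is exactly `P(Bin(m, x) > w)`. Hence, by monotonicity of `I_x`, the bound fails
at `w` (i.e. `R_up(w) < R`) only if `P(W ≤ w) ≤ δ`. The bound never fails at `w = m`, and `W ≤ m`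
almost surely, so the failure set is finite; it lies below its largest element `w*`, and its
probability is at most `P(W ≤ w*) ≤ δ`. -/

open Polynomial Finset

section Bernstein

variable {R : Type*} [CommRing R]

theorem derivative_sum_bernsteinPolynomial_Ioc (n w j : ℕ) (hwj : w ≤ j) :
    derivative (∑ k ∈ Ioc w j, bernsteinPolynomial R (n + 1) k) =
      (n + 1 : R[X]) * (bernsteinPolynomial R n w - bernsteinPolynomial R n j) := by
  induction j, hwj using Nat.le_induction with
  | base => simp
  | succ j hwj ih =>
    rw [sum_Ioc_succ_top hwj, derivative_add, ih, bernsteinPolynomial.derivative_succ,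
      Nat.add_sub_cancel]
    push_cast
    ring

theorem derivative_sum_bernsteinPolynomial_Ioc_succ {n w : ℕ} (hw : w ≤ n) :
    derivative (∑ k ∈ Ioc w (n + 1), bernsteinPolynomial R (n + 1) k) =
      (n + 1 : R[X]) * bernsteinPolynomial R n w := by
  rw [derivative_sum_bernsteinPolynomial_Ioc n w (n + 1) (by omega),
    bernsteinPolynomial.eq_zero_of_lt R n.lt_succ_self, sub_zero]

end Bernstein

theorem eval_bernsteinPolynomial (n k : ℕ) (x : ℝ) :
    (bernsteinPolynomial ℝ n k).eval x = n.choose k * x ^ k * (1 - x) ^ (n - k) := by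
  simp [bernsteinPolynomial]

theorem eval_bernsteinPolynomial_nonneg (n k : ℕ) {x : ℝ} (hx : x ∈ Set.Icc (0 : ℝ) 1) :
    0 ≤ (bernsteinPolynomial ℝ n k).eval x := by
  obtain ⟨hx0, hx1⟩ := hx
  have : 0 ≤ 1 - x := sub_nonneg.2 hx1
  rw [eval_bernsteinPolynomial]
  positivity

theorem integral_eval_bernsteinPolynomial {n w : ℕ} (hw : w ≤ n) (x : ℝ) :
    ∫ u in (0 : ℝ)..x, (n + 1) * (bernsteinPolynomial ℝ n w).eval u =
      ∑ k ∈ Ioc w (n + 1), (bernsteinPolynomial ℝ (n + 1) k).eval x := by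
  set P := ∑ k ∈ Ioc w (n + 1), bernsteinPolynomial ℝ (n + 1) k
  have hFTC := intervalIntegral.integral_eq_sub_of_hasDerivAt (fun u _ => P.hasDerivAt u)
    (P.derivative.continuous.intervalIntegrable 0 x)
  have hP0 : P.eval 0 = 0 := by
    simp only [P, eval_finsetSum, bernsteinPolynomial.eval_at_0]
    exact sum_eq_zero fun k hk => if_neg (Nat.zero_lt_of_lt (mem_Ioc.1 hk).1).ne'
  simpa [P, derivative_sum_bernsteinPolynomial_Ioc_succ hw, hP0, eval_finsetSum] using hFTC

theorem regIncBeta_natCast {m w : ℕ} (hw : w < m) (x : ℝ) :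
    regIncBeta ((w : ℝ) + 1) ((m : ℝ) - w) x =
      ∑ k ∈ Ioc w m, (bernsteinPolynomial ℝ m k).eval x := by
  obtain ⟨n, rfl⟩ : ∃ n, m = n + 1 := ⟨m - 1, by omega⟩
  have hwn : w ≤ n := by omega
  have hb : ((n + 1 : ℕ) : ℝ) - w = (n - w : ℕ) + 1 := by push_cast [Nat.cast_sub hwn]; ring
  have hab : (w : ℝ) + 1 + ((n + 1 : ℕ) - w) = (n + 1 : ℕ) + 1 := by push_cast; ring
  have hfac :
      ((n + 1).factorial : ℝ) = (n + 1) * n.choose w * w.factorial * (n - w).factorial := by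
    rw [Nat.factorial_succ, ← Nat.choose_mul_factorial_mul_factorial hwn]
    push_cast
    ring
  have hint : ∫ u in (0 : ℝ)..x, (n + 1) * (bernsteinPolynomial ℝ n w).eval u =
      (n + 1) * n.choose w * ∫ u in (0 : ℝ)..x, u ^ w * (1 - u) ^ (n - w) := by
    rw [← intervalIntegral.integral_const_mul]
    congr 1 with u
    rw [eval_bernsteinPolynomial]
    ring
  rw [← integral_eval_bernsteinPolynomial hwn, hint, regIncBeta, hab, hb,
    Real.Gamma_nat_eq_factorial, Real.Gamma_nat_eq_factorial, Real.Gamma_nat_eq_factorial, hfac]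
  simp only [add_sub_cancel_right, Real.rpow_natCast]
  field_simp

theorem regIncBeta_monotoneOn {a b : ℝ} (ha : 1 ≤ a) (hb : 1 ≤ b) :
    MonotoneOn (regIncBeta a b) (Set.Icc 0 1) := by
  intro x hx y hy hxy
  have hcont : Continuous fun u : ℝ => u ^ (a - 1) * (1 - u) ^ (b - 1) :=
    (Real.continuous_rpow_const (by linarith)).mul
      ((Real.continuous_rpow_const (by linarith)).comp (continuous_const.sub continuous_id))
  have hΓ : 0 < Real.Gamma a * Real.Gamma b / Real.Gamma (a + b) := by
    have : 0 < a := by linarith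
    have : 0 < b := by linarith
    positivity
  refine div_le_div_of_nonneg_right ?_ hΓ.le
  refine intervalIntegral.integral_mono_interval le_rfl hx.1 hxy ?_ (hcont.intervalIntegrable 0 y)
  filter_upwards [ae_restrict_mem measurableSet_Ioc] with u hu
  have : 0 ≤ 1 - u := by linarith [hu.2, hy.2]
  exact mul_nonneg (Real.rpow_nonneg hu.1.le _) (Real.rpow_nonneg this _)

theorem le_regIncBeta_of_betaInv_lt {p a b x : ℝ}
    (hmono : MonotoneOn (regIncBeta a b) (Set.Icc 0 1)) (hp : p ≤ regIncBeta a b 1) (hx : x ≤ 1)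
    (h : betaInv p a b < x) : p ≤ regIncBeta a b x := by
  obtain ⟨y, ⟨hy, hpy⟩, hyx⟩ := exists_lt_of_csInf_lt (by exact ⟨1, ⟨zero_le_one, le_rfl⟩, hp⟩) h
  exact hpy.trans (hmono hy ⟨hy.1.trans hyx.le, hx⟩ hyx.le)

theorem sum_Iic_eval_bernsteinPolynomial_le_of_betaInv_lt {m w : ℕ} (hw : w < m) {δ x : ℝ}
    (hδ : 0 ≤ δ) (hx : x ≤ 1) (h : betaInv (1 - δ) ((w : ℝ) + 1) ((m : ℝ) - w) < x) :
    ∑ k ∈ Iic w, (bernsteinPolynomial ℝ m k).eval x ≤ δ := by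
  have hmono : MonotoneOn (regIncBeta ((w : ℝ) + 1) ((m : ℝ) - w)) (Set.Icc 0 1) :=
    regIncBeta_monotoneOn (by simp) (by rw [le_sub_iff_add_le']; exact_mod_cast hw)
  have hone : regIncBeta ((w : ℝ) + 1) ((m : ℝ) - w) 1 = 1 := by
    rw [regIncBeta_natCast hw, sum_eq_single_of_mem m (by simp [hw])] <;>
      simp +contextual [bernsteinPolynomial.eval_at_1]
  have htail : 1 - δ ≤ ∑ k ∈ Ioc w m, (bernsteinPolynomial ℝ m k).eval x := by
    rw [← regIncBeta_natCast hw]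
    exact le_regIncBeta_of_betaInv_lt hmono (by linarith) hx h
  have htotal : ∑ k ∈ Iic w, (bernsteinPolynomial ℝ m k).eval x
      + ∑ k ∈ Ioc w m, (bernsteinPolynomial ℝ m k).eval x = 1 := by
    rw [← sum_union (Iic_disjoint_Ioc le_rfl), Iic_union_Ioc_eq_Iic hw.le,
      ← Nat.range_succ_eq_Iic, ← eval_finsetSum, bernsteinPolynomial.sum, eval_one]
  linarith

namespace MeasureTheory

variable {Ω : Type*} [MeasurableSpace Ω] {μ : Measure Ω}

theorem measure_preimage_finset_le_of_forall_measure_le {α : Type*} [LinearOrder α] {W : Ω → α}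
    {A : Finset α} {ε : ENNReal} (h : ∀ a ∈ A, μ {ω | W ω ≤ a} ≤ ε) : μ (W ⁻¹' A) ≤ ε := by
  rcases A.eq_empty_or_nonempty with rfl | hA
  · simp
  · calc μ (W ⁻¹' A) ≤ μ {ω | W ω ≤ A.max' hA} := measure_mono fun ω hω => A.le_max' _ hω
      _ ≤ ε := h _ (A.max'_mem hA)

theorem ofReal_one_sub_le_of_measure_compl_le [IsProbabilityMeasure μ] {s : Set Ω} {δ : ℝ}
    (hδ : 0 ≤ δ) (h : μ sᶜ ≤ ENNReal.ofReal δ) : ENNReal.ofReal (1 - δ) ≤ μ s := by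
  rw [ENNReal.ofReal_sub _ hδ, ENNReal.ofReal_one, tsub_le_iff_right]
  calc 1 = μ Set.univ := measure_univ.symm
    _ ≤ μ s + μ sᶜ := measure_univ_le_add_compl s
    _ ≤ μ s + ENNReal.ofReal δ := by gcongr

section Binomial

variable {W : Ω → ℕ} {m : ℕ} {R : ℝ}
  (hlaw : ∀ k, μ {ω | W ω = k} = ENNReal.ofReal ((bernsteinPolynomial ℝ m k).eval R))
include hlaw

theorem measure_lt_eq_zero_of_binomial_law : μ {ω | m < W ω} = 0 := by
  refine measure_mono_null (fun ω (hω : m < W ω) => ?_)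
    (measure_iUnion_null fun k => (hlaw (m + 1 + k)).trans ?_)
  · exact Set.mem_iUnion.2 ⟨W ω - (m + 1), show W ω = m + 1 + (W ω - (m + 1)) by omega⟩
  · rw [bernsteinPolynomial.eq_zero_of_lt ℝ (by omega), eval_zero, ENNReal.ofReal_zero]

theorem measure_le_le_of_binomial_law (hR : R ∈ Set.Icc (0 : ℝ) 1) (a : ℕ) :
    μ {ω | W ω ≤ a} ≤ ENNReal.ofReal (∑ k ∈ Iic a, (bernsteinPolynomial ℝ m k).eval R) := by
  rw [ENNReal.ofReal_sum_of_nonneg fun k _ => eval_bernsteinPolynomial_nonneg m k hR]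
  calc μ {ω | W ω ≤ a} = μ (⋃ k ∈ Iic a, {ω | W ω = k}) := by congr 1; ext ω; simp
    _ ≤ ∑ k ∈ Iic a, μ {ω | W ω = k} := measure_biUnion_finset_le _ _
    _ = _ := sum_congr rfl fun k _ => hlaw k

end Binomial

end MeasureTheory

theorem clopper_pearson_coverage_general
    {Ω : Type*} [MeasurableSpace Ω] (μ : Measure Ω) [IsProbabilityMeasure μ]
    (m : ℕ) (R : ℝ) (hR : R ∈ Set.Icc (0 : ℝ) 1)
    (δ : ℝ) (hδ : δ ∈ Set.Ioo (0 : ℝ) 1)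
    (W : Ω → ℕ)
    (hlaw : ∀ k : ℕ,
      μ {ω | W ω = k} = ENNReal.ofReal ((m.choose k : ℝ) * R ^ k * (1 - R) ^ (m - k))) :
    ENNReal.ofReal (1 - δ)
      ≤ μ {ω | R ≤ if W ω = m then 1
            else betaInv (1 - δ) ((W ω : ℝ) + 1) ((m : ℝ) - (W ω : ℝ))} := by
  simp only [← eval_bernsteinPolynomial] at hlaw
  set A := (range m).filter fun w : ℕ => betaInv (1 - δ) ((w : ℝ) + 1) ((m : ℝ) - w) < R
  have hA : μ (W ⁻¹' A) ≤ ENNReal.ofReal δ := by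
    refine measure_preimage_finset_le_of_forall_measure_le fun w hw => ?_
    obtain ⟨hwm, hwR⟩ := mem_filter.1 hw
    exact (measure_le_le_of_binomial_law hlaw hR w).trans <| ENNReal.ofReal_le_ofReal <|
      sum_Iic_eval_bernsteinPolynomial_le_of_betaInv_lt (mem_range.1 hwm) hδ.1.le hR.2 hwR
  refine ofReal_one_sub_le_of_measure_compl_le hδ.1.le ?_
  calc _ ≤ μ (W ⁻¹' A ∪ {ω | m < W ω}) := measure_mono fun ω hω => by
        simp only [Set.mem_compl_iff, Set.mem_ofPred_eq] at hω
        rcases lt_trichotomy (W ω) m with hlt | heq | hgt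
        · rw [if_neg hlt.ne, not_le] at hω
          exact Or.inl (mem_filter.2 ⟨mem_range.2 hlt, hω⟩)
        · rw [if_pos heq] at hω
          exact (hω hR.2).elim
        · exact Or.inr hgt
    _ ≤ μ (W ⁻¹' A) + μ {ω | m < W ω} := measure_union_le _ _
    _ ≤ ENNReal.ofReal δ := by rw [measure_lt_eq_zero_of_binomial_law hlaw, add_zero]; exact hA

/-- Coverage of the one-sided Clopper–Pearson upper confidence bound: if
`W ~ Binomial(m, R)` and `R_up(w) = BetaInv(1−δ; w+1, m−w)` (with `R_up(m) = 1`),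
then `Pr(R ≤ R_up(W)) ≥ 1 − δ`. -/
theorem clopper_pearson_coverage
    {Ω : Type*} [MeasurableSpace Ω] (μ : Measure Ω) [IsProbabilityMeasure μ]
    (m : ℕ) (hm : 1 ≤ m) (R : ℝ) (hR : R ∈ Set.Icc (0 : ℝ) 1)
    (δ : ℝ) (hδ : δ ∈ Set.Ioo (0 : ℝ) 1)
    (W : Ω → ℕ) (hWmeas : Measurable W)
    (hlaw : ∀ k : ℕ,
      μ {ω | W ω = k} = ENNReal.ofReal ((m.choose k : ℝ) * R ^ k * (1 - R) ^ (m - k))) :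
    ENNReal.ofReal (1 - δ)
      ≤ μ {ω | R ≤ if W ω = m then 1
            else betaInv (1 - δ) ((W ω : ℝ) + 1) ((m : ℝ) - (W ω : ℝ))} :=
  clopper_pearson_coverage_general μ m R hR δ hδ W hlaw
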